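/- arXiv:2510.26757 — 2 statements merged into one kernel-verified Lean document; each statement's English description precedes it below -/
import Mathlib

section
/- Let μ and λ be two compositions of d with n parts. Then the coefficient [z^λ]((Sym^d J)(z_1^{μ_1}⋯z_n^{μ_n})) equals C_{μ,λ}·m_{μ,λ} if μ ≤ λ, and equals 0 otherwise. -/
/-!
Write `w_i = a_i x_i y^{-a_i-1}` for `i < n` and `w_n = y^{-2}`. Then `Sym^d J` sends `z^μ` to
`(∏_{i<n} y^{-a_i μ_i}) z^{μ°} · (-∑_j w_j z_j)^{μ_n}`, where `μ°` is `μ` with its last entry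
replaced by `0`. So `[z^λ]` of it vanishes unless `μ° ≤ λ`, and is otherwise read off from the
coefficient of `z^{λ-μ°}` in the power by the multinomial theorem. Because `μ` and `λ` are both
compositions of `d`, the entries of `λ - μ°` automatically add up to `μ_n`, so that coefficient is
`μ_n! / ((λ-μ)°! λ_n!) · ∏_j w_j^{(λ-μ°)_j}`, and collecting the powers of `y` gives `C_{μ,λ} m_{μ,λ}`.
-/

open MvPolynomial Finset

noncomputable section

/-- `Kk p` is the fraction field of `ℂ[x_1,…,x_p, y]`, a polynomial ring in `p+1` variables
(so the paper's `n` is `p+1`). -/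
abbrev Kk (p : ℕ) := FractionRing (MvPolynomial (Fin (p+1)) ℂ)

variable {p : ℕ}

/-- the images `x_i` (for `i = 1, …, p`) in the fraction field -/
def xv (i : Fin p) : Kk p :=
  algebraMap (MvPolynomial (Fin (p+1)) ℂ) (Kk p) (X i.castSucc)

/-- the image of `y` in the fraction field -/
def yv : Kk p :=
  algebraMap (MvPolynomial (Fin (p+1)) ℂ) (Kk p) (X (Fin.last p))

/-- `(Sym^d J)`: the substitution `z_i ↦ y^{-a_i} z_i` for `i = 1, …, n-1` and
`z_n ↦ -∑_{i<n} a_i x_i y^{-a_i-1} z_i - y^{-2} z_n`. -/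
def symJ (a : Fin p → ℤ) :
    MvPolynomial (Fin (p+1)) (Kk p) →ₐ[Kk p] MvPolynomial (Fin (p+1)) (Kk p) :=
  aeval (Fin.lastCases
    (-(∑ i : Fin p, C ((a i : Kk p) * xv i * yv ^ (-(a i) - 1 : ℤ)) * X i.castSucc)
      - C (yv ^ (-2 : ℤ)) * X (Fin.last p))
    (fun i => C (yv ^ (-(a i) : ℤ)) * X i.castSucc))

/-- coefficient extraction `[z^λ]` -/
def coeffOf (lam : Fin (p+1) → ℕ) (h : MvPolynomial (Fin (p+1)) (Kk p)) : Kk p :=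
  coeff (Finsupp.equivFunOnFinite.symm lam) h

/-- `a · λ° = ∑_{i=1}^{n-1} a_i λ_i` -/
def aDot (a : Fin p → ℤ) (lam : Fin (p+1) → ℕ) : ℤ :=
  ∑ i : Fin p, a i * lam i.castSucc

/-- the monomial `m_{μ,λ} = (∏_{i<n} x_i^{λ_i - μ_i}) y^{-a·λ° - λ_n - μ_n}` -/
def mMono (a : Fin p → ℤ) (μ lam : Fin (p+1) → ℕ) : Kk p :=
  (∏ i : Fin p, xv i ^ (lam i.castSucc - μ i.castSucc)) *
    yv ^ (-(aDot a lam) - (lam (Fin.last p) : ℤ) - (μ (Fin.last p) : ℤ))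

/-- the integer coefficient
`C_{μ,λ} = (-1)^{μ_n} μ_n! / ((λ_1-μ_1)! ⋯ (λ_{n-1}-μ_{n-1})! λ_n!) ∏_{i<n} a_i^{λ_i-μ_i}` -/
def Cco (a : Fin p → ℤ) (μ lam : Fin (p+1) → ℕ) : ℤ :=
  (-1) ^ (μ (Fin.last p)) *
    (((μ (Fin.last p)).factorial /
      ((∏ i : Fin p, (lam i.castSucc - μ i.castSucc).factorial) *
        (lam (Fin.last p)).factorial) : ℕ) : ℤ) *
    ∏ i : Fin p, (a i) ^ (lam i.castSucc - μ i.castSucc)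

lemma prod_zpow_pow_eq_zpow_sum {ι G : Type*} [CommGroupWithZero G] (s : Finset ι) {y : G}
    (hy : y ≠ 0) (e : ι → ℤ) (n : ι → ℕ) : ∏ i ∈ s, (y ^ e i) ^ n i = y ^ ∑ i ∈ s, e i * n i := by
  induction s using Finset.cons_induction with
  | empty => simp
  | cons j s hj ih => rw [sum_cons, prod_cons, zpow_add₀ hy, ih, ← zpow_natCast, ← zpow_mul]

lemma yv_ne_zero : (yv : Kk p) ≠ 0 :=
  (map_ne_zero_iff _ (IsFractionRing.injective _ _)).mpr (X_ne_zero _)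

def symJWeight (a : Fin p → ℤ) : Fin (p+1) → Kk p :=
  Fin.lastCases (yv ^ (-2 : ℤ)) fun i => (a i : Kk p) * xv i * yv ^ (-(a i) - 1 : ℤ)

lemma symJ_X_castSucc (a : Fin p → ℤ) (i : Fin p) :
    symJ a (X i.castSucc) = C (yv ^ (-(a i) : ℤ)) * X i.castSucc := by
  simp [symJ]

lemma symJ_X_last (a : Fin p → ℤ) :
    symJ a (X (Fin.last p)) = -∑ j, symJWeight a j • X j := by
  simp only [symJ, aeval_X, Fin.lastCases_last, Fin.sum_univ_castSucc, symJWeight,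
    Fin.lastCases_castSucc, smul_eq_C_mul]
  ring

lemma symJ_monomial_one (a : Fin p → ℤ) (m : Fin (p+1) →₀ ℕ) :
    symJ a (monomial m 1) =
      monomial (m.erase (Fin.last p))
          ((-1) ^ m (Fin.last p) * ∏ i, (yv ^ (-(a i) : ℤ)) ^ m i.castSucc) *
        (∑ j, symJWeight a j • X j) ^ m (Fin.last p) := by
  simp only [monomial_eq, one_mul, Finsupp.prod_fintype _ _ (fun _ => pow_zero _),
    map_prod, map_pow, Fin.prod_univ_castSucc, symJ_X_castSucc, symJ_X_last,
    Finsupp.erase_same, Finsupp.erase_ne (Fin.castSucc_ne_last _), pow_zero, mul_one, map_mul,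
    mul_pow, prod_mul_distrib, map_neg, map_one]
  ring

lemma erase_last_le_iff {m l : Fin (p+1) →₀ ℕ} :
    m.erase (Fin.last p) ≤ l ↔ ∀ i : Fin p, m i.castSucc ≤ l i.castSucc := by
  simp [Finsupp.le_def, Fin.forall_fin_succ', Finsupp.erase_ne (Fin.castSucc_ne_last _)]

lemma prod_symJWeight_pow (a : Fin p → ℤ) (k : Fin (p+1) → ℕ) :
    ∏ j, symJWeight a j ^ k j =
      (∏ i, (a i : Kk p) ^ k i.castSucc) * (∏ i, xv i ^ k i.castSucc) *
        yv ^ (∑ i, (-(a i) - 1) * (k i.castSucc : ℤ) + -2 * k (Fin.last p)) := by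
  rw [zpow_add₀ yv_ne_zero, ← prod_zpow_pow_eq_zpow_sum _ yv_ne_zero, zpow_mul, zpow_natCast]
  simp only [Fin.prod_univ_castSucc, symJWeight, Fin.lastCases_castSucc, Fin.lastCases_last,
    mul_pow, prod_mul_distrib]
  ring

section TsubEraseLast

variable {m l : Fin (p+1) →₀ ℕ}

lemma tsub_erase_last_castSucc (i : Fin p) :
    (l - m.erase (Fin.last p)) i.castSucc = l i.castSucc - m i.castSucc := by
  simp [Finsupp.erase_ne (Fin.castSucc_ne_last _)]

lemma tsub_erase_last_last : (l - m.erase (Fin.last p)) (Fin.last p) = l (Fin.last p) := by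
  simp

variable (h : ∀ i : Fin p, m i.castSucc ≤ l i.castSucc) (hml : ∑ j, m j = ∑ j, l j)
include h hml

lemma sum_tsub_erase_last : ∑ j, (l - m.erase (Fin.last p)) j = m (Fin.last p) := by
  simp only [Fin.sum_univ_castSucc, tsub_erase_last_castSucc, tsub_erase_last_last] at hml ⊢
  rw [sum_tsub_distrib _ fun i _ => h i]
  have := sum_le_sum fun i (_ : i ∈ univ) => h i
  omega

lemma multinomial_tsub_erase_last :
    (l - m.erase (Fin.last p)).multinomial =
      (m (Fin.last p)).factorial /
        ((∏ i : Fin p, (l i.castSucc - m i.castSucc).factorial) * (l (Fin.last p)).factorial) := by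
  rw [Finsupp.multinomial_eq_of_support_subset (subset_univ _), Nat.multinomial,
    sum_tsub_erase_last h hml, Fin.prod_univ_castSucc]
  simp only [tsub_erase_last_castSucc, tsub_erase_last_last]

lemma yv_exponent_eq (a : Fin p → ℤ) :
    ∑ i, -(a i) * (m i.castSucc : ℤ) +
        (∑ i, (-(a i) - 1) * ((l i.castSucc - m i.castSucc : ℕ) : ℤ) + -2 * l (Fin.last p)) =
      -aDot a l - l (Fin.last p) - m (Fin.last p) := by
  have hlast := sum_tsub_erase_last h hml
  simp only [Fin.sum_univ_castSucc, tsub_erase_last_castSucc, tsub_erase_last_last] at hlast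
  replace hlast := congrArg (Nat.cast : ℕ → ℤ) hlast
  push_cast [Nat.cast_sub (h _)] at hlast ⊢
  simp only [aDot, mul_sub, sub_mul, neg_mul, one_mul, sum_sub_distrib, sum_neg_distrib] at hlast ⊢
  linarith

lemma coeff_factor_eq_Cco_mul_mMono (a : Fin p → ℤ) :
    ((-1) ^ m (Fin.last p) * ∏ i, (yv ^ (-(a i) : ℤ)) ^ m i.castSucc) *
        (((l - m.erase (Fin.last p)).multinomial : Kk p) *
          (l - m.erase (Fin.last p)).prod fun j e => symJWeight a j ^ e) =
      (Cco a m l : Kk p) * mMono a m l := by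
  rw [Finsupp.prod_fintype _ _ fun _ => pow_zero _, prod_symJWeight_pow,
    multinomial_tsub_erase_last h hml, prod_zpow_pow_eq_zpow_sum _ yv_ne_zero, Cco, mMono,
    ← yv_exponent_eq h hml, zpow_add₀ yv_ne_zero (∑ i, -(a i) * (m i.castSucc : ℤ))]
  simp only [tsub_erase_last_castSucc, tsub_erase_last_last, Int.cast_mul, Int.cast_pow,
    Int.cast_neg, Int.cast_one, Int.cast_natCast, Int.cast_prod]
  ring

end TsubEraseLast

theorem coeff_symJ_monomial_general (p d : ℕ) (a : Fin p → ℤ)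
    (μ lam : Fin (p+1) → ℕ) (hμ : ∑ i, μ i = d) (hlam : ∑ i, lam i = d) :
    coeffOf lam (symJ a (monomial (Finsupp.equivFunOnFinite.symm μ) (1 : Kk p))) =
      if ∀ i : Fin p, μ i.castSucc ≤ lam i.castSucc then
        (Cco a μ lam : Kk p) * mMono a μ lam
      else 0 := by
  set m := Finsupp.equivFunOnFinite.symm μ
  set l := Finsupp.equivFunOnFinite.symm lam
  have hml : ∑ j, m j = ∑ j, l j := by simp [m, l, hμ, hlam]
  rw [coeffOf, symJ_monomial_one, coeff_monomial_mul']
  by_cases hle : ∀ i : Fin p, μ i.castSucc ≤ lam i.castSucc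
  · rw [if_pos (erase_last_le_iff.mpr hle), if_pos hle, coeff_linearCombination_X_pow_of_fintype,
      Finsupp.sum_fintype _ _ fun _ => rfl, if_pos (sum_tsub_erase_last hle hml)]
    exact coeff_factor_eq_Cco_mul_mMono hle hml a
  · rw [if_neg (mt erase_last_le_iff.mp hle), if_neg hle]

/-- `[z^λ]((Sym^d J)(z^μ)) = C_{μ,λ} m_{μ,λ}` if `μ ≤ λ`, and `0` otherwise. -/
theorem coeff_symJ_monomial (p d : ℕ) (hp : 1 ≤ p) (hd : 1 ≤ d) (a : Fin p → ℤ)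
    (μ lam : Fin (p+1) → ℕ) (hμ : ∑ i, μ i = d) (hlam : ∑ i, lam i = d) :
    coeffOf lam (symJ a (monomial (Finsupp.equivFunOnFinite.symm μ) (1 : Kk p))) =
      if ∀ i : Fin p, μ i.castSucc ≤ lam i.castSucc then
        (Cco a μ lam : Kk p) * mMono a μ lam
      else 0 :=
  coeff_symJ_monomial_general p d a μ lam hμ hlam

end
end

section
/- Assume a_1 ≤ a_2 ≤ … ≤ a_m ≤ 0 < a_{m+1} ≤ … ≤ a_{n−1} for some 0 ≤ m < n, and assume that a_k ≠ 0 for at least one k ∈ {1,…,n−1}. Let d ≥ 2 and let f_1,…,f_n ∈ R[z_1,…,z_n] and g_1,…,g_n ∈ A[z_1,…,z_n] be homogeneous of degree d in z_1,…,z_n, satisfying in K[z_1,…,z_n] the compatibility conditions g_j = y^{d a_j}·(Sym^d J)(f_j) for all j = 1,…,n−1 and g_n = −y^{2d}·(Sym^d J)(f_n) − Σ_{i=1}^{n−1} a_i x_i^d y^d·(Sym^d J)(f_i). Then for every index j with m+1 ≤ j ≤ n and every composition λ of d with λ_i = 0 for all m+1 ≤ i ≤ n−1, the coefficient [z^λ](f_j)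 ∈ R = ℂ[x_1,…,x_{n−1},y] has zero constant term, i.e. it vanishes under the evaluation x_1 = ⋯ = x_{n−1} = y = 0. -/
open MvPolynomial Finset

noncomputable section

variable {p : ℕ}

/-- the coordinate ring `A = ℂ[x_1 y^{-a_1}, …, x_{n-1} y^{-a_{n-1}}, y^{-1}]`, i.e. the
ℂ-subalgebra of `K` generated by the `x_i y^{-a_i}` and `y^{-1}`. -/
def Asub (a : Fin p → ℤ) : Subalgebra ℂ (Kk p) :=
  Algebra.adjoin ℂ ((Set.range fun i : Fin p => xv i * yv ^ (-(a i) : ℤ)) ∪ {yv⁻¹})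

/-- the inclusion `R[z_1,…,z_n] → K[z_1,…,z_n]` where `R = ℂ[x_1,…,x_{n-1},y]` -/
def toK {p : ℕ} :
    MvPolynomial (Fin (p+1)) (MvPolynomial (Fin (p+1)) ℂ) →
      MvPolynomial (Fin (p+1)) (Kk p) :=
  MvPolynomial.map (algebraMap (MvPolynomial (Fin (p+1)) ℂ) (Kk p))

/-!
Give `x_i` the weight `a_i` and `y` the weight `1`. The generators `x_i y^{-a_i}` and `y^{-1}`
of `A` have weight `≤ 0`, so for every `u ∈ A` some `y^M u` is a polynomial of weighted degree
`≤ M`.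

For `M ≥ max a_i` the substitution `σ = y^{M+2} · (Sym^d J)` has coefficients in `R`, and `(C_n)`
multiplied by `y^{(M+1)d}` reads `y^d σ(f_n) + ∑ a_i x_i^d σ(f_i) = -y^{(M+1)d} g_n`. The left
side lies in `R[z]`, so its coefficients have weighted degree `≤ (M+1)d`.

If `λ_n < d`, kill `z_i` for `λ_i = 0` and `x_i` for `λ_i ≠ 0`: then `σ` becomes diagonal and
`[z^λ]` of the left side is `± y^E (y^d f_{n,λ} + ∑ a_i x_i^d f_{i,λ})`. As `a_i ≤ 0` wherever
`λ_i ≠ 0`, the monomials `y^{E+d}` and, for `a_j > 0`, `x_j^d y^E` have weight `> (M+1)d`, so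
their coefficients, the constant terms of `f_{n,λ}` and `a_j f_{j,λ}`, vanish.

If `λ = d e_n` that weight is too small. Keeping only `x_k, y, z_k, z_n`, one reads instead
the coefficient of `z_k z_n^{d-1}`, which sees `f_{·,d e_n}` through the term
`a_k x_k y^{-a_k-1} z_k` of `J(z_n)`; since `d ≥ 2`, the terms `a_i x_i^d f_i` cannot reach the
monomial `x_k y^{…}` read there.
-/

namespace Finsupp

variable {σ : Type*}

theorem single_add_single_inj [DecidableEq σ] {k n : σ} (hkn : k ≠ n) {α β α' β' : ℕ} :
    single k α + single n β = single k α' + single n β' ↔ α = α' ∧ β = β' := by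
  refine ⟨fun h => ?_, by rintro ⟨rfl, rfl⟩; rfl⟩
  have hk := DFunLike.congr_fun h k
  have hn := DFunLike.congr_fun h n
  simp only [add_apply, single_eq_same, single_eq_of_ne hkn, single_eq_of_ne hkn.symm, add_zero,
    zero_add] at hk hn
  exact ⟨hk, hn⟩

theorem eq_single_add_single_of_forall [DecidableEq σ] {k n : σ} (hkn : k ≠ n)
    {μ : σ →₀ ℕ} (h : ∀ v, v ≠ k → v ≠ n → μ v = 0) :
    μ = single k (μ k) + single n (μ n) := by
  ext v
  by_cases hvk : v = k
  · subst hvk; simp [hkn]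
  by_cases hvn : v = n
  · subst hvn; simp [Ne.symm hkn]
  simp [h v hvk hvn, Ne.symm hvk, Ne.symm hvn]

theorem eq_single_of_sum_eq_of_le [Fintype σ] {μ : σ →₀ ℕ} {d : ℕ} {i : σ}
    (hμ : ∑ v, μ v = d) (hi : d ≤ μ i) : μ = single i d := by
  classical
  rw [← Finset.add_sum_erase _ _ (Finset.mem_univ i)] at hμ
  have hrest := Finset.sum_eq_zero_iff.mp (show ∑ v ∈ Finset.univ.erase i, μ v = 0 by omega)
  ext v
  by_cases hv : v = i
  · subst hv
    simp only [single_eq_same]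
    omega
  · rw [single_eq_of_ne hv, hrest v (Finset.mem_erase.mpr ⟨hv, Finset.mem_univ v⟩)]

end Finsupp

namespace MvPolynomial

variable {σ S : Type*} [CommSemiring S]

section KillVars

open scoped Classical in
def killVars (s : Set σ) : MvPolynomial σ S →ₐ[S] MvPolynomial σ S :=
  aeval fun i => if i ∈ s then 0 else X i

variable (s : Set σ)

@[simp] theorem killVars_C (r : S) : killVars s (C r : MvPolynomial σ S) = C r := aeval_C _ _

open scoped Classical in
theorem killVars_X (i : σ) : killVars s (X i : MvPolynomial σ S) = if i ∈ s then 0 else X i :=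
  aeval_X _ _

theorem killVars_X_of_notMem {i : σ} (hi : i ∉ s) :
    killVars s (X i : MvPolynomial σ S) = X i := by
  classical
  rw [killVars_X, if_neg hi]

theorem killVars_X_of_mem {i : σ} (hi : i ∈ s) : killVars s (X i : MvPolynomial σ S) = 0 := by
  classical
  rw [killVars_X, if_pos hi]

theorem X_dvd_killVars_X (i : σ) : (X i : MvPolynomial σ S) ∣ killVars s (X i) := by
  classical
  rw [killVars_X]
  split_ifs
  exacts [dvd_zero _, dvd_rfl]

theorem X_pow_dvd_killVars_mul_X_pow (r : MvPolynomial σ S) (i : σ) (k : ℕ) :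
    X i ^ k ∣ killVars s (r * X i ^ k) := by
  rw [map_mul, map_pow]
  exact dvd_mul_of_dvd_right (pow_dvd_pow_of_dvd (X_dvd_killVars_X s i) k) _

open scoped Classical in
theorem killVars_monomial (μ : σ →₀ ℕ) (r : S) :
    killVars s (monomial μ r) = if ∀ i ∈ s, μ i = 0 then monomial μ r else 0 := by
  rw [killVars, aeval_monomial, algebraMap_eq, monomial_eq]
  split_ifs with h
  · congr 1
    refine Finsupp.prod_congr fun i hi => ?_
    rw [if_neg fun hs => Finsupp.mem_support_iff.mp hi (h i hs)]
  · obtain ⟨i, hs, hi⟩ := not_forall₂.mp h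
    rw [Finsupp.prod, Finset.prod_eq_zero (Finsupp.mem_support_iff.mpr hi)
      (by rw [if_pos hs, zero_pow hi]), mul_zero]

open scoped Classical in
theorem coeff_killVars (μ : σ →₀ ℕ) (q : MvPolynomial σ S) :
    coeff μ (killVars s q) = if ∀ i ∈ s, μ i = 0 then coeff μ q else 0 := by
  induction q using MvPolynomial.induction_on' with
  | monomial ν r =>
    rw [killVars_monomial]
    by_cases hνμ : ν = μ
    · subst hνμ
      split_ifs <;> rfl
    · split_ifs <;> simp [coeff_monomial, hνμ]
  | add q₁ q₂ h₁ h₂ => simp only [map_add, coeff_add, h₁, h₂]; split_ifs <;> simp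

theorem coeff_killVars_of_forall {μ : σ →₀ ℕ} (hμ : ∀ i ∈ s, μ i = 0)
    (q : MvPolynomial σ S) :
    coeff μ (killVars s q) = coeff μ q := by
  classical
  rw [coeff_killVars, if_pos hμ]

theorem coeff_zero_killVars (q : MvPolynomial σ S) : coeff 0 (killVars s q) = coeff 0 q :=
  coeff_killVars_of_forall s (fun _ _ => rfl) q

end KillVars

theorem coeff_eq_zero_of_X_pow_dvd {i : σ} {k : ℕ} {q : MvPolynomial σ S} (hq : X i ^ k ∣ q)
    {γ : σ →₀ ℕ} (hγ : γ i < k) : coeff γ q = 0 := by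
  obtain ⟨r, rfl⟩ := hq
  rw [X_pow_eq_monomial, coeff_monomial_mul', if_neg (by rwa [Finsupp.single_le_iff, not_le])]

theorem coeff_monomial_mul_self (β : σ →₀ ℕ) (r : S) (q : MvPolynomial σ S) :
    coeff β (monomial β r * q) = r * coeff 0 q := by
  simpa using coeff_monomial_mul 0 β r q

theorem X_mul_X_pow_eq_monomial (i j : σ) (k : ℕ) :
    (X i * X j ^ k : MvPolynomial σ S) = monomial (Finsupp.single i 1 + Finsupp.single j k) 1 := by
  rw [monomial_single_add, pow_one, X_pow_eq_monomial]

theorem coeff_intCast_mul {R : Type*} [CommRing R] (μ : σ →₀ ℕ) (z : ℤ)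
    (q : MvPolynomial σ R) :
    coeff μ ((z : MvPolynomial σ R) * q) = z * coeff μ q := by
  rw [← map_intCast (C : R →+* MvPolynomial σ R), coeff_C_mul]

section Weight

variable (w : σ → ℤ)

theorem weightedTotalDegree'_le_iff {q : MvPolynomial σ S} {L : ℤ} :
    weightedTotalDegree' w q ≤ L ↔ ∀ β ∈ q.support, Finsupp.weight w β ≤ L := by
  simp only [weightedTotalDegree', Finset.sup_le_iff, WithBot.coe_le_coe]

theorem coeff_eq_zero_of_weightedTotalDegree'_le {q : MvPolynomial σ S} {L : ℤ}
    (hq : weightedTotalDegree' w q ≤ L) {γ : σ →₀ ℕ} (hγ : L < Finsupp.weight w γ) :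
    coeff γ q = 0 :=
  notMem_support_iff.mp fun h => (((weightedTotalDegree'_le_iff w).mp hq) γ h).not_gt hγ

theorem weightedTotalDegree'_mul_le (q r : MvPolynomial σ S) :
    weightedTotalDegree' w (q * r) ≤ weightedTotalDegree' w q + weightedTotalDegree' w r := by
  classical
  refine Finset.sup_le fun β hβ => ?_
  obtain ⟨β₁, hβ₁, β₂, hβ₂, rfl⟩ := Finset.mem_add.mp (support_mul q r hβ)
  rw [map_add, WithBot.coe_add]
  exact add_le_add (Finset.le_sup (f := fun s => (Finsupp.weight w s : WithBot ℤ)) hβ₁)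
    (Finset.le_sup (f := fun s => (Finsupp.weight w s : WithBot ℤ)) hβ₂)

theorem weightedTotalDegree'_add_le (q r : MvPolynomial σ S) :
    weightedTotalDegree' w (q + r) ≤
      max (weightedTotalDegree' w q) (weightedTotalDegree' w r) := by
  classical
  exact (Finset.sup_mono support_add).trans_eq Finset.sup_union

theorem weightedTotalDegree'_monomial_le (β : σ →₀ ℕ) (r : S) :
    weightedTotalDegree' w (monomial β r) ≤ Finsupp.weight w β := by
  classical
  refine Finset.sup_le fun γ hγ => ?_
  rw [Finset.mem_singleton.mp (support_monomial_subset hγ)]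

theorem weightedTotalDegree'_C_le (r : S) :
    weightedTotalDegree' w (C r : MvPolynomial σ S) ≤ (0 : ℤ) :=
  (weightedTotalDegree'_monomial_le w 0 r).trans_eq (by simp)

theorem weightedTotalDegree'_killVars_le (s : Set σ) (q : MvPolynomial σ S) :
    weightedTotalDegree' w (killVars s q) ≤ weightedTotalDegree' w q := by
  classical
  refine Finset.sup_mono fun β hβ => ?_
  rw [mem_support_iff, coeff_killVars] at hβ
  rw [mem_support_iff]
  split_ifs at hβ
  exacts [hβ, absurd rfl hβ]

theorem weightedTotalDegree'_le_of_monomial_mul_le [NoZeroDivisors S] {β : σ →₀ ℕ} {r : S}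
    (hr : r ≠ 0) {q : MvPolynomial σ S} {L : ℤ}
    (h : weightedTotalDegree' w (monomial β r * q) ≤ L) :
    weightedTotalDegree' w q ≤ ((L - Finsupp.weight w β : ℤ) : WithBot ℤ) := by
  rw [weightedTotalDegree'_le_iff] at h ⊢
  intro γ hγ
  have := h (γ + β) (by
    rw [mem_support_iff, add_comm, coeff_monomial_mul]
    exact mul_ne_zero hr (mem_support_iff.mp hγ))
  rw [map_add] at this
  omega

end Weight

section Substitution

theorem map_aeval_eq_aeval_map {R : Type*} [CommSemiring R] (φ : R →+* S)
    (s : σ → MvPolynomial σ R) (f : MvPolynomial σ R) :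
    map φ (aeval s f) = aeval (fun v => map φ (s v)) (map φ f) := by
  induction f using MvPolynomial.induction_on with
  | C r => simp
  | add f₁ f₂ h₁ h₂ => simp only [map_add, h₁, h₂]
  | mul_X f v h => simp only [map_mul, aeval_X, h, MvPolynomial.map_X]

theorem IsHomogeneous.aeval_const_mul {A : Type*} [CommSemiring A] [Algebra S A]
    {f : MvPolynomial σ S} {d : ℕ} (hf : f.IsHomogeneous d) (c : A) (g : σ → A) :
    MvPolynomial.aeval (fun v => c * g v) f = c ^ d * MvPolynomial.aeval g f := by
  conv_lhs => rw [f.as_sum]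
  conv_rhs => rw [f.as_sum]
  simp only [map_sum, Finset.mul_sum, aeval_monomial]
  refine Finset.sum_congr rfl fun μ hμ => ?_
  have hdeg : ∑ v ∈ μ.support, μ v = d := by
    simpa [Finsupp.weight_apply, Finsupp.sum] using hf (mem_support_iff.mp hμ)
  simp only [mul_pow, Finsupp.prod_mul]
  rw [Finsupp.prod, Finset.prod_pow_eq_pow_sum, hdeg]
  ring

theorem coeff_aeval_C_mul_X (c : σ → S) (f : MvPolynomial σ S) (μ : σ →₀ ℕ) :
    coeff μ (aeval (fun v => C (c v) * X v) f) = (μ.prod fun v i => c v ^ i) * coeff μ f := by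
  induction f using MvPolynomial.induction_on' with
  | monomial ν r =>
    have : aeval (fun v => C (c v) * X v) (monomial ν r) =
        monomial ν (r * ν.prod fun v i => c v ^ i) := by
      rw [aeval_monomial, algebraMap_eq, monomial_eq, map_mul, mul_assoc]
      simp only [mul_pow, Finsupp.prod_mul, ← map_pow, map_finsuppProd]
    classical
    rw [this, coeff_monomial, coeff_monomial]
    split_ifs with h
    · rw [h, mul_comm]
    · rw [mul_zero]
  | add f₁ f₂ h₁ h₂ => rw [map_add, coeff_add, h₁, h₂, coeff_add, mul_add]

section Shear

variable [DecidableEq σ] {k n : σ} (hkn : k ≠ n) (c e : S)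
include hkn

theorem coeff_single_pow_shear (m : ℕ) :
    coeff (Finsupp.single n m) ((C c * X k + C e * X n) ^ m) = e ^ m := by
  induction m with
  | zero => simp
  | succ m ih =>
    rw [pow_succ', add_mul, coeff_add, mul_assoc, coeff_C_mul, coeff_X_mul',
      if_neg (by simp [hkn]), mul_zero, zero_add, mul_assoc, coeff_C_mul,
      Finsupp.single_add, add_comm, coeff_X_mul, ih, pow_succ']

theorem coeff_single_add_single_pow_shear (m : ℕ) :
    coeff (Finsupp.single k 1 + Finsupp.single n m) ((C c * X k + C e * X n) ^ (m + 1)) =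
      (m + 1) * c * e ^ m := by
  induction m with
  | zero => simp [coeff_X, Finsupp.single_left_inj, hkn.symm]
  | succ m ih =>
    rw [pow_succ', add_mul, coeff_add, mul_assoc, coeff_C_mul, coeff_X_mul,
      coeff_single_pow_shear hkn, mul_assoc, coeff_C_mul,
      show Finsupp.single k 1 + Finsupp.single n (m + 1) =
        Finsupp.single n 1 + (Finsupp.single k 1 + Finsupp.single n m) by
          ext v; simp only [Finsupp.add_apply, Finsupp.single_apply]; split_ifs <;> omega,
      coeff_X_mul, ih]
    push_cast
    ring

variable {s : σ → MvPolynomial σ S} {b : S} (hk : s k = C b * X k)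
  (hn : s n = C c * X k + C e * X n) (hs : ∀ v, v ≠ k → v ≠ n → s v = 0)
include hk hn hs

theorem coeff_prod_pow_shear (D : ℕ) (μ : σ →₀ ℕ) :
    coeff (Finsupp.single k 1 + Finsupp.single n D) (μ.prod fun v i => s v ^ i) =
      (if μ = Finsupp.single k 1 + Finsupp.single n D then b * e ^ D else 0) +
        if μ = Finsupp.single n (D + 1) then (D + 1) * c * e ^ D else 0 := by
  by_cases hout : ∃ v, v ≠ k ∧ v ≠ n ∧ μ v ≠ 0
  · obtain ⟨v, hvk, hvn, hv⟩ := hout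
    have hμ : ∀ ν : σ →₀ ℕ, ν v = 0 → μ ≠ ν := fun ν hν h => hv (h ▸ hν)
    rw [Finsupp.prod, Finset.prod_eq_zero (Finsupp.mem_support_iff.mpr hv)
        (by rw [hs v hvk hvn, zero_pow hv]), coeff_zero,
      if_neg (hμ _ (by simp [hvk.symm, hvn.symm])),
      if_neg (hμ _ (by simp [hvn.symm])), add_zero]
  push Not at hout
  rw [Finsupp.eq_single_add_single_of_forall hkn hout]
  generalize μ k = α, μ n = β
  have hL : ((C c * X k + C e * X n : MvPolynomial σ S) ^ β).IsHomogeneous β := by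
    simpa using ((isHomogeneous_C_mul_X c k).add (isHomogeneous_C_mul_X e n)).pow β
  have key₀ : Finsupp.single k α + Finsupp.single n β = Finsupp.single n (D + 1) ↔
      α = 0 ∧ β = D + 1 := by
    rw [← Finsupp.single_add_single_inj hkn, Finsupp.single_zero, zero_add]
  rw [Finsupp.prod_add_index' (fun _ => pow_zero _) (fun _ _ _ => pow_add _ _ _),
    Finsupp.prod_single_index (h := fun v i => s v ^ i) (pow_zero _),
    Finsupp.prod_single_index (h := fun v i => s v ^ i) (pow_zero _), hk, hn,
    mul_pow, ← C_pow, C_mul_X_pow_eq_monomial, coeff_monomial_mul']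
  simp only [Finsupp.single_le_iff, Finsupp.single_add_single_inj hkn, key₀, Finsupp.add_apply,
    Finsupp.single_eq_same, Finsupp.single_eq_of_ne hkn, add_zero]
  rcases α with _ | _ | α
  · rw [Finsupp.single_zero, tsub_zero, pow_zero, one_mul, if_pos zero_le_one]
    by_cases hβ : β = D + 1
    · rw [hβ, coeff_single_add_single_pow_shear hkn]
      simp
    · rw [hL.coeff_eq_zero (by simp; omega)]
      simp [hβ]
  · rw [add_tsub_cancel_left, pow_one, if_pos le_rfl]
    by_cases hβ : β = D
    · rw [hβ, coeff_single_pow_shear hkn]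
      simp
    · rw [hL.coeff_eq_zero (by simp; omega)]
      simp [hβ]
  · rw [if_neg (by omega)]
    simp

theorem coeff_aeval_shear (D : ℕ) (f : MvPolynomial σ S) :
    coeff (Finsupp.single k 1 + Finsupp.single n D) (aeval s f) =
      b * e ^ D * coeff (Finsupp.single k 1 + Finsupp.single n D) f +
        (D + 1) * c * e ^ D * coeff (Finsupp.single n (D + 1)) f := by
  induction f using MvPolynomial.induction_on' with
  | monomial μ r =>
    rw [aeval_monomial, algebraMap_eq, coeff_C_mul, coeff_prod_pow_shear hkn c e hk hn hs,
      coeff_monomial, coeff_monomial]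
    split_ifs <;> ring
  | add f₁ f₂ h₁ h₂ => rw [map_add, coeff_add, h₁, h₂, coeff_add, coeff_add]; ring

end Shear

variable {R : Type*} [CommSemiring R] (t : Set σ) (φ : R →+* R)

theorem killVars_map_C_mul (r : R) (q : MvPolynomial σ R) :
    killVars t (map φ (C r * q)) = C (φ r) * killVars t (map φ q) := by
  rw [map_mul, map_C, map_mul, killVars_C]

theorem killVars_map_aeval (s : σ → MvPolynomial σ R) (f : MvPolynomial σ R) :
    killVars t (map φ (aeval s f)) = aeval (fun v => killVars t (map φ (s v))) (map φ f) := by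
  rw [map_aeval_eq_aeval_map, comp_aeval_apply]

variable {t φ}

theorem coeff_killVars_map_C_mul_aeval_of_diag {s : σ → MvPolynomial σ R} {c : σ → R}
    (hs : ∀ v, killVars t (map φ (s v)) = C (c v) * X v) (μ : σ →₀ ℕ) (r : R)
    (f : MvPolynomial σ R) :
    coeff μ (killVars t (map φ (C r * aeval s f))) =
      φ r * ((μ.prod fun v i => c v ^ i) * φ (coeff μ f)) := by
  rw [killVars_map_C_mul, coeff_C_mul, killVars_map_aeval, _root_.funext hs, coeff_aeval_C_mul_X,
    coeff_map]

theorem coeff_killVars_map_C_mul_aeval_of_shear [DecidableEq σ] {k n : σ} (hkn : k ≠ n)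
    {s : σ → MvPolynomial σ R} {b c e : R} (hk : killVars t (map φ (s k)) = C b * X k)
    (hn : killVars t (map φ (s n)) = C c * X k + C e * X n)
    (hs : ∀ v, v ≠ k → v ≠ n → killVars t (map φ (s v)) = 0) (D : ℕ) (r : R)
    (f : MvPolynomial σ R) :
    coeff (Finsupp.single k 1 + Finsupp.single n D) (killVars t (map φ (C r * aeval s f))) =
      φ r * (b * e ^ D * φ (coeff (Finsupp.single k 1 + Finsupp.single n D) f) +
        (D + 1) * c * e ^ D * φ (coeff (Finsupp.single n (D + 1)) f)) := by
  rw [killVars_map_C_mul, coeff_C_mul, killVars_map_aeval,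
    coeff_aeval_shear (s := fun v => killVars t (map φ (s v))) hkn c e hk hn hs, coeff_map,
    coeff_map]

end Substitution

end MvPolynomial

namespace TangentCoefficients

abbrev PolyXY (p : ℕ) := MvPolynomial (Fin (p + 1)) ℂ

abbrev PolyXYZ (p : ℕ) := MvPolynomial (Fin (p + 1)) (PolyXY p)

variable (a : Fin p → ℤ)

def xyWeight : Fin (p + 1) → ℤ := Fin.snoc a 1

@[simp] theorem xyWeight_castSucc (i : Fin p) : xyWeight a i.castSucc = a i :=
  Fin.snoc_castSucc ..

@[simp] theorem xyWeight_last : xyWeight a (Fin.last p) = 1 := Fin.snoc_last ..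

theorem algebraMap_X_last : algebraMap (PolyXY p) (Kk p) (X (Fin.last p)) = yv := rfl

theorem algebraMap_X_castSucc (i : Fin p) :
    algebraMap (PolyXY p) (Kk p) (X i.castSucc) = xv i := rfl

theorem yv_ne_zero : (yv : Kk p) ≠ 0 :=
  (map_ne_zero_iff _ (IsFractionRing.injective _ _)).mpr (X_ne_zero _)

variable {a}

theorem weightedTotalDegree'_X_last_pow_mul_le {P : PolyXY p} {L : ℤ}
    (hP : weightedTotalDegree' (xyWeight a) P ≤ L) (k : ℕ) :
    weightedTotalDegree' (xyWeight a) (X (Fin.last p) ^ k * P) ≤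
      ((k + L : ℤ) : WithBot ℤ) := by
  refine (weightedTotalDegree'_mul_le _ _ _).trans ?_
  rw [WithBot.coe_add]
  refine add_le_add ?_ hP
  rw [X_pow_eq_monomial]
  refine (weightedTotalDegree'_monomial_le _ _ _).trans_eq ?_
  simp [Finsupp.weight_single]

variable (a)

def nonposWeightSubalgebra : Subalgebra ℂ (Kk p) where
  carrier := {u | ∃ M : ℕ, ∃ P : PolyXY p,
    weightedTotalDegree' (xyWeight a) P ≤ M ∧ algebraMap _ (Kk p) P = yv ^ M * u}
  mul_mem' := by
    rintro u₁ u₂ ⟨M₁, P₁, hP₁, e₁⟩ ⟨M₂, P₂, hP₂, e₂⟩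
    refine ⟨M₁ + M₂, P₁ * P₂, ?_, by rw [map_mul, e₁, e₂]; ring⟩
    exact (weightedTotalDegree'_mul_le _ _ _).trans (by push_cast; exact add_le_add hP₁ hP₂)
  add_mem' := by
    rintro u₁ u₂ ⟨M₁, P₁, hP₁, e₁⟩ ⟨M₂, P₂, hP₂, e₂⟩
    refine ⟨M₁ + M₂, X (Fin.last p) ^ M₂ * P₁ + X (Fin.last p) ^ M₁ * P₂, ?_, ?_⟩
    · refine (weightedTotalDegree'_add_le _ _ _).trans (max_le ?_ ?_)
      · exact (weightedTotalDegree'_X_last_pow_mul_le hP₁ M₂).trans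
          (by push_cast; rw [add_comm])
      · exact (weightedTotalDegree'_X_last_pow_mul_le hP₂ M₁).trans (by push_cast; rfl)
    · simp only [map_add, map_mul, map_pow, algebraMap_X_last, e₁, e₂]
      ring
  zero_mem' := ⟨0, 0, by simp [weightedTotalDegree'_zero], by simp⟩
  one_mem' := ⟨0, C 1, weightedTotalDegree'_C_le _ _, by simp⟩
  algebraMap_mem' r := ⟨0, C r, weightedTotalDegree'_C_le _ _,
    by rw [pow_zero, one_mul, ← algebraMap_eq, ← IsScalarTower.algebraMap_apply]⟩

theorem Asub_le_nonposWeightSubalgebra : Asub a ≤ nonposWeightSubalgebra a := by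
  refine Algebra.adjoin_le ?_
  rintro _ (⟨i, rfl⟩ | h)
  · refine ⟨(a i).toNat, X i.castSucc * X (Fin.last p) ^ (-a i).toNat, ?_, ?_⟩
    · rw [X_mul_X_pow_eq_monomial]
      refine (weightedTotalDegree'_monomial_le _ _ _).trans ?_
      simp only [map_add, Finsupp.weight_single, xyWeight_castSucc, xyWeight_last, one_smul,
        nsmul_eq_mul, mul_one]
      norm_cast
      omega
    · rw [map_mul, map_pow, algebraMap_X_castSucc, algebraMap_X_last, mul_left_comm,
        ← zpow_natCast, ← zpow_natCast, ← zpow_add₀ yv_ne_zero]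
      congr 2
      omega
  · rw [Set.mem_singleton_iff.mp h]
    refine ⟨1, C 1, (weightedTotalDegree'_C_le _ _).trans (by norm_num), ?_⟩
    rw [map_one, map_one, pow_one, mul_inv_cancel₀ yv_ne_zero]

variable {a}

theorem weightedTotalDegree'_le_of_algebraMap_eq {c : PolyXY p} {L : ℕ} {u : Kk p}
    (hu : u ∈ Asub a) (h : algebraMap _ (Kk p) c = yv ^ L * u) :
    weightedTotalDegree' (xyWeight a) c ≤ (L : ℤ) := by
  obtain ⟨M, P, hP, hPu⟩ := Asub_le_nonposWeightSubalgebra a hu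
  have hcP : X (Fin.last p) ^ M * c = X (Fin.last p) ^ L * P :=
    IsFractionRing.injective _ (Kk p) (by
      simp only [map_mul, map_pow, algebraMap_X_last, h, hPu]
      ring)
  have hM := weightedTotalDegree'_X_last_pow_mul_le hP L
  rw [← hcP, X_pow_eq_monomial] at hM
  simpa [Finsupp.weight_single] using weightedTotalDegree'_le_of_monomial_mul_le _ one_ne_zero hM

variable (a) (M : ℕ) (e : Fin p → ℕ)

/-- `y^{M+2}` times the substitution of `symJ`, written for `e i = M + 1 - a i` so that its
coefficients lie in `R`. -/
def polyJ : Fin (p + 1) → PolyXYZ p :=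
  Fin.lastCases
    (-(∑ i, C ((a i : PolyXY p) * X i.castSucc * X (Fin.last p) ^ e i) * X i.castSucc +
      C (X (Fin.last p) ^ M) * X (Fin.last p)))
    fun i => C (X (Fin.last p) ^ (e i + 1)) * X i.castSucc

variable {a M e}

theorem yv_pow_eq_mul_zpow {k : ℕ} {z : ℤ} (h : (k : ℤ) = M + 2 + z) :
    (yv : Kk p) ^ k = yv ^ (M + 2) * yv ^ z := by
  rw [← zpow_natCast, ← zpow_natCast, ← zpow_add₀ yv_ne_zero, h]
  norm_cast

theorem map_polyJ (he : ∀ i, (e i : ℤ) + a i = M + 1) (v : Fin (p + 1)) :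
    MvPolynomial.map (algebraMap _ (Kk p)) (polyJ a M e v) = C (yv ^ (M + 2)) *
      Fin.lastCases
        (-(∑ i : Fin p, C ((a i : Kk p) * xv i * yv ^ (-(a i) - 1 : ℤ)) * X i.castSucc)
          - C (yv ^ (-2 : ℤ)) * X (Fin.last p))
        (fun i => C (yv ^ (-(a i) : ℤ)) * X i.castSucc) v := by
  induction v using Fin.lastCases with
  | cast i =>
    simp only [polyJ, Fin.lastCases_castSucc, map_mul, MvPolynomial.map_C, MvPolynomial.map_X]
    rw [map_pow, algebraMap_X_last, yv_pow_eq_mul_zpow (M := M) (z := -a i)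
      (by push_cast; linarith [he i]), C_mul, mul_assoc]
  | last =>
    have hx : ∀ i, MvPolynomial.map (algebraMap _ (Kk p))
        (C ((a i : PolyXY p) * X i.castSucc * X (Fin.last p) ^ e i) * X i.castSucc) =
        C (yv ^ (M + 2)) * (C ((a i : Kk p) * xv i * yv ^ (-(a i) - 1 : ℤ)) * X i.castSucc) :=
      fun i => by
        rw [map_mul, MvPolynomial.map_C, MvPolynomial.map_X, ← mul_assoc, ← C_mul]
        congr 2
        simp only [map_mul, map_intCast, map_pow, algebraMap_X_last, algebraMap_X_castSucc]
        rw [yv_pow_eq_mul_zpow (M := M) (z := -(a i) - 1) (by linarith [he i])]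
        ring
    have hy : MvPolynomial.map (algebraMap _ (Kk p))
        (C (X (Fin.last p) ^ M : PolyXY p) * X (Fin.last p)) =
        C (yv ^ (M + 2)) * (C (yv ^ (-2 : ℤ)) * X (Fin.last p)) := by
      rw [map_mul, MvPolynomial.map_C, MvPolynomial.map_X, map_pow, algebraMap_X_last,
        yv_pow_eq_mul_zpow (M := M) (z := -2) (by ring), C_mul, mul_assoc]
    rw [polyJ, Fin.lastCases_last, Fin.lastCases_last, map_neg, map_add, map_sum,
      Finset.sum_congr rfl fun i _ => hx i, hy, ← Finset.mul_sum]
    ring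

theorem map_aeval_polyJ (he : ∀ i, (e i : ℤ) + a i = M + 1) {f : PolyXYZ p} {d : ℕ}
    (hf : f.IsHomogeneous d) :
    MvPolynomial.map (algebraMap _ (Kk p)) (aeval (polyJ a M e) f) =
      C (yv ^ ((M + 2) * d)) * symJ a (toK f) := by
  rw [map_aeval_eq_aeval_map, funext (map_polyJ he), (hf.map _).aeval_const_mul, ← C_pow,
    ← pow_mul]
  rfl

variable (a M e) in
def compatPoly (d : ℕ) (F : Fin (p + 1) → PolyXYZ p) : PolyXYZ p :=
  C (X (Fin.last p) ^ d) * aeval (polyJ a M e) (F (Fin.last p)) +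
    ∑ i, C ((a i : PolyXY p) * X i.castSucc ^ d) * aeval (polyJ a M e) (F i.castSucc)

section Compatibility

variable (he : ∀ i, (e i : ℤ) + a i = M + 1) {d : ℕ} {F : Fin (p + 1) → PolyXYZ p}
  (hF : ∀ j, (F j).IsHomogeneous d) {gₙ : MvPolynomial (Fin (p + 1)) (Kk p)}
  (hCn : gₙ = -(C (yv ^ (2 * d)) * symJ a (toK (F (Fin.last p)))) -
    ∑ i : Fin p, C ((a i : Kk p) * xv i ^ d * yv ^ d) * symJ a (toK (F i.castSucc)))
include he hF hCn

theorem map_compatPoly :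
    MvPolynomial.map (algebraMap _ (Kk p)) (compatPoly a M e d F) =
      -(C (yv ^ ((M + 1) * d)) * gₙ) := by
  simp only [compatPoly, hCn, map_add, map_mul, map_sum, MvPolynomial.map_C,
    map_aeval_polyJ he (hF _), map_pow, map_intCast, algebraMap_X_last, algebraMap_X_castSucc,
    neg_sub, mul_sub, Finset.mul_sum]
  rw [sub_eq_neg_add]
  congr 1
  · ring
  · exact Finset.sum_congr rfl fun i _ => by ring

theorem weightedTotalDegree'_coeff_compatPoly_le (hgA : ∀ c, coeff c gₙ ∈ Asub a)
    (ν : Fin (p + 1) →₀ ℕ) :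
    weightedTotalDegree' (xyWeight a) (coeff ν (compatPoly a M e d F)) ≤
      (((M + 1) * d : ℕ) : ℤ) :=
  weightedTotalDegree'_le_of_algebraMap_eq (neg_mem (hgA ν)) (by
    rw [← coeff_map, map_compatPoly he hF hCn, coeff_neg, coeff_C_mul, mul_neg])

end Compatibility

variable (M e) in
def diagCoeff (μ : Fin (p + 1) →₀ ℕ) : Fin (p + 1) → PolyXY p :=
  Fin.lastCases (-(X (Fin.last p) ^ M))
    fun i => if μ i.castSucc = 0 then 0 else X (Fin.last p) ^ (e i + 1)

theorem prod_diagCoeff_pow (μ : Fin (p + 1) →₀ ℕ) :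
    (μ.prod fun v i => diagCoeff M e μ v ^ i) = C ((-1) ^ μ (Fin.last p)) *
      X (Fin.last p) ^ (M * μ (Fin.last p) + ∑ i, (e i + 1) * μ i.castSucc) := by
  have hc : ∀ i : Fin p, diagCoeff M e μ i.castSucc ^ μ i.castSucc =
      X (Fin.last p) ^ ((e i + 1) * μ i.castSucc) := fun i => by
    by_cases hi : μ i.castSucc = 0
    · simp [hi]
    · simp only [diagCoeff, Fin.lastCases_castSucc, if_neg hi, pow_mul]
  rw [Finsupp.prod_fintype _ _ fun v => pow_zero _, Fin.prod_univ_castSucc,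
    Finset.prod_congr rfl fun i _ => hc i, Finset.prod_pow_eq_pow_sum, diagCoeff,
    Fin.lastCases_last, neg_pow, map_pow, map_neg, map_one]
  ring

theorem killVars_map_polyJ_diag (μ : Fin (p + 1) →₀ ℕ) (v : Fin (p + 1)) :
    killVars {v | v ≠ Fin.last p ∧ μ v = 0} (MvPolynomial.map
        (killVars (S := ℂ) {v | v ≠ Fin.last p ∧ μ v ≠ 0} : PolyXY p →+* PolyXY p)
        (polyJ a M e v)) =
      C (diagCoeff M e μ v) * X v := by
  have hy : ∀ j, killVars (S := ℂ) {v | v ≠ Fin.last p ∧ μ v ≠ 0} (X (Fin.last p) ^ j) =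
      X (Fin.last p) ^ j := fun j => by
    rw [map_pow, killVars_X_of_notMem _ fun h => h.1 rfl]
  induction v using Fin.lastCases with
  | cast i =>
    rw [polyJ, Fin.lastCases_castSucc, killVars_map_C_mul, MvPolynomial.map_X,
      AlgHom.coe_toRingHom, hy, diagCoeff, Fin.lastCases_castSucc]
    by_cases hi : μ i.castSucc = 0
    · rw [killVars_X_of_mem {v | v ≠ Fin.last p ∧ μ v = 0} ⟨Fin.castSucc_ne_last i, hi⟩,
        if_pos hi, map_zero, mul_zero, zero_mul]
    · rw [killVars_X_of_notMem _ fun h => hi h.2, if_neg hi]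
  | last =>
    have hterm : ∀ i : Fin p, killVars {v | v ≠ Fin.last p ∧ μ v = 0} (MvPolynomial.map
        (killVars (S := ℂ) {v | v ≠ Fin.last p ∧ μ v ≠ 0} : PolyXY p →+* PolyXY p)
        (C ((a i : PolyXY p) * X i.castSucc * X (Fin.last p) ^ e i) * X i.castSucc)) = 0 := by
      intro i
      rw [killVars_map_C_mul, MvPolynomial.map_X, AlgHom.coe_toRingHom]
      by_cases hi : μ i.castSucc = 0
      · rw [killVars_X_of_mem {v | v ≠ Fin.last p ∧ μ v = 0} ⟨Fin.castSucc_ne_last i, hi⟩,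
          mul_zero]
      · rw [show killVars (S := ℂ) {v | v ≠ Fin.last p ∧ μ v ≠ 0}
            ((a i : PolyXY p) * X i.castSucc * X (Fin.last p) ^ e i) = 0 by
          rw [map_mul, map_mul, killVars_X_of_mem {v | v ≠ Fin.last p ∧ μ v ≠ 0}
            ⟨Fin.castSucc_ne_last i, hi⟩, mul_zero, zero_mul], map_zero, zero_mul]
    rw [polyJ, Fin.lastCases_last, map_neg, map_add, map_sum, map_neg, map_add, map_sum,
      Finset.sum_eq_zero fun i _ => hterm i, zero_add, killVars_map_C_mul, MvPolynomial.map_X,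
      AlgHom.coe_toRingHom, hy, killVars_X_of_notMem _ fun h => h.1 rfl, diagCoeff,
      Fin.lastCases_last, map_neg]
    ring

theorem killVars_coeff_compatPoly_diag (d : ℕ) (F : Fin (p + 1) → PolyXYZ p)
    (μ : Fin (p + 1) →₀ ℕ) :
    let κ := killVars (S := ℂ) {v | v ≠ Fin.last p ∧ μ v ≠ 0}
    κ (coeff μ (compatPoly a M e d F)) =
      C ((-1) ^ μ (Fin.last p)) *
        X (Fin.last p) ^ (M * μ (Fin.last p) + ∑ i, (e i + 1) * μ i.castSucc) *
        (X (Fin.last p) ^ d * κ (coeff μ (F (Fin.last p))) +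
          ∑ i, κ ((a i : PolyXY p) * X i.castSucc ^ d) * κ (coeff μ (F i.castSucc))) := by
  dsimp only
  have hterm := coeff_killVars_map_C_mul_aeval_of_diag (killVars_map_polyJ_diag (a := a)
    (M := M) (e := e) μ) μ
  simp only [AlgHom.coe_toRingHom, prod_diagCoeff_pow] at hterm
  have hcoeff : killVars (S := ℂ) {v | v ≠ Fin.last p ∧ μ v ≠ 0}
      (coeff μ (compatPoly a M e d F)) = coeff μ (killVars {v | v ≠ Fin.last p ∧ μ v = 0}
        (MvPolynomial.map (killVars (S := ℂ) {v | v ≠ Fin.last p ∧ μ v ≠ 0} :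
          PolyXY p →+* PolyXY p) (compatPoly a M e d F))) := by
    rw [coeff_killVars_of_forall _ fun v hv => hv.2, coeff_map, AlgHom.coe_toRingHom]
  rw [hcoeff, compatPoly, map_add, map_add, coeff_add, hterm, map_sum, map_sum, coeff_sum,
    Finset.sum_congr rfl fun i _ => hterm _ _, map_pow, killVars_X_of_notMem _ fun h => h.1 rfl,
    mul_add, Finset.mul_sum]
  exact congrArg₂ (· + ·) (mul_left_comm _ _ _)
    (Finset.sum_congr rfl fun i _ => mul_left_comm _ _ _)

section Shear

variable (k : Fin p)

abbrev shearKilled : Set (Fin (p + 1)) := {k.castSucc, Fin.last p}ᶜ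

theorem killVars_X_last_pow_shear (j : ℕ) :
    killVars (S := ℂ) (shearKilled k) (X (Fin.last p) ^ j) = X (Fin.last p) ^ j := by
  rw [map_pow, killVars_X_of_notMem _ (by simp)]

theorem killVars_map_polyJ_shear_self :
    killVars (shearKilled k) (MvPolynomial.map
        (killVars (S := ℂ) (shearKilled k) : PolyXY p →+* PolyXY p) (polyJ a M e k.castSucc)) =
      C (X (Fin.last p) ^ (e k + 1)) * X k.castSucc := by
  rw [polyJ, Fin.lastCases_castSucc, killVars_map_C_mul, MvPolynomial.map_X, AlgHom.coe_toRingHom,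
    killVars_X_last_pow_shear, killVars_X_of_notMem _ (by simp)]

theorem killVars_map_polyJ_shear_of_ne {v : Fin (p + 1)} (hvk : v ≠ k.castSucc)
    (hvn : v ≠ Fin.last p) :
    killVars (shearKilled k) (MvPolynomial.map
        (killVars (S := ℂ) (shearKilled k) : PolyXY p →+* PolyXY p) (polyJ a M e v)) = 0 := by
  obtain ⟨i, rfl⟩ := Fin.exists_castSucc_eq.mpr hvn
  rw [polyJ, Fin.lastCases_castSucc, killVars_map_C_mul, MvPolynomial.map_X,
    killVars_X_of_mem _ (by simp [hvk]), mul_zero]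

theorem killVars_map_polyJ_shear_last :
    killVars (shearKilled k) (MvPolynomial.map
        (killVars (S := ℂ) (shearKilled k) : PolyXY p →+* PolyXY p)
        (polyJ a M e (Fin.last p))) =
      C (-((a k : PolyXY p) * X k.castSucc * X (Fin.last p) ^ e k)) * X k.castSucc +
        C (-(X (Fin.last p) ^ M)) * X (Fin.last p) := by
  rw [polyJ, Fin.lastCases_last, map_neg, map_add, map_sum, map_neg, map_add, map_sum,
    Finset.sum_eq_single k (fun i _ hik => by
      rw [killVars_map_C_mul, MvPolynomial.map_X, killVars_X_of_mem _ (by simp [hik]), mul_zero])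
      (fun h => absurd (Finset.mem_univ k) h),
    killVars_map_C_mul, killVars_map_C_mul, MvPolynomial.map_X, MvPolynomial.map_X,
    AlgHom.coe_toRingHom, killVars_X_last_pow_shear, show killVars (S := ℂ) (shearKilled k)
      ((a k : PolyXY p) * X k.castSucc * X (Fin.last p) ^ e k) =
        (a k : PolyXY p) * X k.castSucc * X (Fin.last p) ^ e k by
      rw [map_mul, map_mul, map_intCast, killVars_X_last_pow_shear,
        killVars_X_of_notMem _ (by simp)],
    killVars_X_of_notMem _ (by simp), killVars_X_of_notMem _ (by simp), map_neg, map_neg]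
  ring

theorem killVars_coeff_compatPoly_shear (F : Fin (p + 1) → PolyXYZ p) (D : ℕ) :
    let κ := killVars (S := ℂ) (shearKilled k)
    let ν := Finsupp.single k.castSucc 1 + Finsupp.single (Fin.last p) D
    let ν₀ := Finsupp.single (Fin.last p) (D + 1)
    κ (coeff ν (compatPoly a M e (D + 1) F)) =
      C ((-1) ^ D) * X (Fin.last p) ^ (M * D + e k) *
        (X (Fin.last p) ^ (D + 2) * κ (coeff ν (F (Fin.last p))) -
          X k.castSucc * X (Fin.last p) ^ (D + 1) *
            ((((D + 1) * a k : ℤ) : PolyXY p) * κ (coeff ν₀ (F (Fin.last p)))) +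
          X k.castSucc ^ (D + 1) * X (Fin.last p) *
            ((a k : PolyXY p) * κ (coeff ν (F k.castSucc))) -
          X k.castSucc ^ (D + 2) *
            ((((D + 1) * a k ^ 2 : ℤ) : PolyXY p) * κ (coeff ν₀ (F k.castSucc)))) := by
  dsimp only
  have hterm := coeff_killVars_map_C_mul_aeval_of_shear (Fin.castSucc_ne_last k)
    (killVars_map_polyJ_shear_self (a := a) (M := M) (e := e) k)
    (killVars_map_polyJ_shear_last k) (fun v => killVars_map_polyJ_shear_of_ne k) D
  simp only [AlgHom.coe_toRingHom] at hterm
  have hcoeff : ∀ f : PolyXYZ p, killVars (S := ℂ) (shearKilled k)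
      (coeff (Finsupp.single k.castSucc 1 + Finsupp.single (Fin.last p) D) f) =
      coeff (Finsupp.single k.castSucc 1 + Finsupp.single (Fin.last p) D)
        (killVars (shearKilled k) (MvPolynomial.map
          (killVars (S := ℂ) (shearKilled k) : PolyXY p →+* PolyXY p) f)) := fun f => by
    rw [coeff_killVars_of_forall _ ?_, coeff_map, AlgHom.coe_toRingHom]
    intro v hv
    simp only [shearKilled, Set.mem_compl_iff, Set.mem_insert_iff, Set.mem_singleton_iff,
      not_or] at hv
    simp [Ne.symm hv.1, Ne.symm hv.2]
  rw [hcoeff, compatPoly, map_add, map_add, coeff_add, hterm, map_sum, map_sum, coeff_sum,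
    Finset.sum_congr rfl fun i _ => hterm _ _, Finset.sum_eq_single k
      (fun i _ hik => by rw [map_mul, map_pow, killVars_X_of_mem _ (by simp [hik]),
        zero_pow (Nat.succ_ne_zero D), mul_zero, zero_mul])
      (fun h => absurd (Finset.mem_univ k) h),
    killVars_X_last_pow_shear, map_mul, map_intCast, map_pow, killVars_X_of_notMem _ (by simp),
    map_pow, map_neg, map_one]
  push_cast
  ring

end Shear

section Readings

variable {d : ℕ} {F : Fin (p + 1) → PolyXYZ p} (he : ∀ i, (e i : ℤ) + a i = M + 1)
  (hbound : ∀ ν, weightedTotalDegree' (xyWeight a) (coeff ν (compatPoly a M e d F)) ≤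
    (((M + 1) * d : ℕ) : ℤ))
include he hbound

theorem weightedTotalDegree'_diag_le {μ : Fin (p + 1) →₀ ℕ} (hμ : ∑ v, μ v = d) :
    let κ := killVars (S := ℂ) {v | v ≠ Fin.last p ∧ μ v ≠ 0}
    weightedTotalDegree' (xyWeight a)
      (X (Fin.last p) ^ d * κ (coeff μ (F (Fin.last p))) +
        ∑ i, κ ((a i : PolyXY p) * X i.castSucc ^ d) * κ (coeff μ (F i.castSucc))) ≤
      ((2 * μ (Fin.last p) + ∑ i, a i * μ i.castSucc - d : ℤ) : WithBot ℤ) := by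
  dsimp only
  have h := (weightedTotalDegree'_killVars_le (xyWeight a) {v | v ≠ Fin.last p ∧ μ v ≠ 0}
    _).trans (hbound μ)
  rw [killVars_coeff_compatPoly_diag, C_mul_X_pow_eq_monomial] at h
  refine (weightedTotalDegree'_le_of_monomial_mul_le _
    (pow_ne_zero _ (neg_ne_zero.mpr one_ne_zero)) h).trans_eq ?_
  have hsum : ∑ i : Fin p, (μ i.castSucc : ℤ) = d - μ (Fin.last p) := by
    rw [← hμ, Fin.sum_univ_castSucc]
    push_cast
    ring
  have hE : ((∑ i, (e i + 1) * μ i.castSucc : ℕ) : ℤ) =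
      (M + 2) * ∑ i : Fin p, (μ i.castSucc : ℤ) - ∑ i, a i * μ i.castSucc := by
    push_cast
    rw [Finset.mul_sum, ← Finset.sum_sub_distrib]
    exact Finset.sum_congr rfl fun i _ => by linear_combination (μ i.castSucc : ℤ) * he i
  simp only [Finsupp.weight_single, xyWeight_last, nsmul_eq_mul, mul_one]
  congr 1
  push_cast at hE ⊢
  rw [hE, hsum]
  ring

theorem constantCoeff_coeff_last_eq_zero_of_lt {μ : Fin (p + 1) →₀ ℕ} (hμ : ∑ v, μ v = d)
    (hμn : μ (Fin.last p) < d) (hneg : ∑ i, a i * μ i.castSucc ≤ 0) :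
    constantCoeff (coeff μ (F (Fin.last p))) = 0 := by
  have h := coeff_eq_zero_of_weightedTotalDegree'_le _ (weightedTotalDegree'_diag_le he hbound hμ)
    (γ := Finsupp.single (Fin.last p) d) (by simp [Finsupp.weight_single]; omega)
  rw [coeff_add, coeff_sum, Finset.sum_eq_zero fun i _ => coeff_eq_zero_of_X_pow_dvd
      (dvd_mul_of_dvd_left (X_pow_dvd_killVars_mul_X_pow _ _ _ _) _) (by simp; omega),
    add_zero, X_pow_eq_monomial, coeff_monomial_mul_self, one_mul] at h
  rwa [constantCoeff_eq, ← coeff_zero_killVars]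

theorem constantCoeff_coeff_castSucc_eq_zero_of_lt {μ : Fin (p + 1) →₀ ℕ}
    (hμ : ∑ v, μ v = d) (hμn : μ (Fin.last p) < d) (hneg : ∑ i, a i * μ i.castSucc ≤ 0)
    {j : Fin p} (hj : 0 < a j) (hμj : μ j.castSucc = 0) :
    constantCoeff (coeff μ (F j.castSucc)) = 0 := by
  have h := coeff_eq_zero_of_weightedTotalDegree'_le _ (weightedTotalDegree'_diag_le he hbound hμ)
    (γ := Finsupp.single j.castSucc d) (by simp [Finsupp.weight_single]; nlinarith)
  rw [coeff_add, coeff_eq_zero_of_X_pow_dvd (dvd_mul_right _ _) (by simp; omega), zero_add,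
    coeff_sum, Finset.sum_eq_single j (fun i _ hij => coeff_eq_zero_of_X_pow_dvd
      (dvd_mul_of_dvd_left (X_pow_dvd_killVars_mul_X_pow _ _ _ _) _)
      (by simp [Fin.castSucc_inj, Ne.symm hij]; omega))
      (fun h => absurd (Finset.mem_univ j) h), map_mul, map_intCast, map_pow,
    killVars_X_of_notMem _ fun h => h.2 hμj, ← map_intCast (C : ℂ →+* PolyXY p),
    C_mul_X_pow_eq_monomial, coeff_monomial_mul_self, coeff_zero_killVars] at h
  rw [constantCoeff_eq]
  exact (mul_eq_zero.mp h).resolve_left (Int.cast_ne_zero.mpr hj.ne')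

theorem weightedTotalDegree'_shear_le (k : Fin p) {D : ℕ} (hd : d = D + 1) :
    let κ := killVars (S := ℂ) (shearKilled k)
    let ν := Finsupp.single k.castSucc 1 + Finsupp.single (Fin.last p) D
    let ν₀ := Finsupp.single (Fin.last p) (D + 1)
    weightedTotalDegree' (xyWeight a)
      (X (Fin.last p) ^ (D + 2) * κ (coeff ν (F (Fin.last p))) -
          X k.castSucc * X (Fin.last p) ^ (D + 1) *
            ((((D + 1) * a k : ℤ) : PolyXY p) * κ (coeff ν₀ (F (Fin.last p)))) +
          X k.castSucc ^ (D + 1) * X (Fin.last p) *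
            ((a k : PolyXY p) * κ (coeff ν (F k.castSucc))) -
          X k.castSucc ^ (D + 2) *
            ((((D + 1) * a k ^ 2 : ℤ) : PolyXY p) * κ (coeff ν₀ (F k.castSucc)))) ≤
      ((D + a k : ℤ) : WithBot ℤ) := by
  dsimp only
  subst hd
  have h := (weightedTotalDegree'_killVars_le (xyWeight a) (shearKilled k) _).trans
    (hbound (Finsupp.single k.castSucc 1 + Finsupp.single (Fin.last p) D))
  rw [killVars_coeff_compatPoly_shear, C_mul_X_pow_eq_monomial] at h
  refine (weightedTotalDegree'_le_of_monomial_mul_le _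
    (pow_ne_zero _ (neg_ne_zero.mpr one_ne_zero)) h).trans_eq ?_
  simp only [Finsupp.weight_single, xyWeight_last, nsmul_eq_mul, mul_one]
  congr 1
  push_cast
  linear_combination -(he k)

theorem constantCoeff_coeff_single_last_eq_zero (hd : 2 ≤ d) {k : Fin p} (hk : a k ≠ 0) :
    constantCoeff (coeff (Finsupp.single (Fin.last p) d) (F (Fin.last p))) = 0 := by
  obtain ⟨D, rfl⟩ : ∃ D, d = D + 1 := ⟨d - 1, by omega⟩
  have h := coeff_eq_zero_of_weightedTotalDegree'_le _
    (weightedTotalDegree'_shear_le he hbound k rfl)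
    (γ := Finsupp.single k.castSucc 1 + Finsupp.single (Fin.last p) (D + 1))
    (by simp [Finsupp.weight_single]; omega)
  rw [coeff_sub, coeff_add, coeff_sub,
    coeff_eq_zero_of_X_pow_dvd (dvd_mul_right _ _) (by simp),
    coeff_eq_zero_of_X_pow_dvd (dvd_mul_of_dvd_left (dvd_mul_right _ _) _) (by simp; omega),
    coeff_eq_zero_of_X_pow_dvd (dvd_mul_right _ _) (by simp),
    X_mul_X_pow_eq_monomial, coeff_monomial_mul_self, one_mul, coeff_intCast_mul,
    coeff_zero_killVars] at h
  simp only [zero_sub, add_zero, sub_zero, neg_eq_zero, mul_eq_zero, Int.cast_eq_zero] at h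
  rw [constantCoeff_eq]
  exact h.resolve_left (by omega)

theorem constantCoeff_coeff_single_last_castSucc_eq_zero (hd : 1 ≤ d) {k : Fin p}
    (hk : 0 < a k) :
    constantCoeff (coeff (Finsupp.single (Fin.last p) d) (F k.castSucc)) = 0 := by
  obtain ⟨D, rfl⟩ : ∃ D, d = D + 1 := ⟨d - 1, by omega⟩
  have h := coeff_eq_zero_of_weightedTotalDegree'_le _
    (weightedTotalDegree'_shear_le he hbound k rfl) (γ := Finsupp.single k.castSucc (D + 2))
    (by simp [Finsupp.weight_single]; nlinarith)
  rw [coeff_sub, coeff_add, coeff_sub,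
    coeff_eq_zero_of_X_pow_dvd (dvd_mul_right _ _) (by simp),
    coeff_eq_zero_of_X_pow_dvd (dvd_mul_of_dvd_left (dvd_mul_left _ _) _) (by simp),
    coeff_eq_zero_of_X_pow_dvd (k := 1)
      (by rw [pow_one]; exact dvd_mul_of_dvd_left (dvd_mul_left _ _) _) (by simp),
    X_pow_eq_monomial, coeff_monomial_mul_self, one_mul, coeff_intCast_mul,
    coeff_zero_killVars] at h
  simp only [sub_zero, zero_sub, add_zero, neg_eq_zero, mul_eq_zero, Int.cast_eq_zero] at h
  rw [constantCoeff_eq]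
  exact h.resolve_left (not_or.mpr ⟨by omega, pow_ne_zero _ hk.ne'⟩)

end Readings

end TangentCoefficients

open TangentCoefficients

theorem tangent_coefficients_vanish_general (p d m : ℕ) (hd : 2 ≤ d)
    (a : Fin p → ℤ)
    (hnonpos : ∀ i : Fin p, (i : ℕ) < m → a i ≤ 0)
    (hpos : ∀ i : Fin p, m ≤ (i : ℕ) → 0 < a i)
    (hne : ∃ k : Fin p, a k ≠ 0)
    (F : Fin (p+1) → MvPolynomial (Fin (p+1)) (MvPolynomial (Fin (p+1)) ℂ))
    (g : Fin (p+1) → MvPolynomial (Fin (p+1)) (Kk p))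
    (hFhom : ∀ j, (F j).IsHomogeneous d)
    (hgA : ∀ j c, coeff c (g j) ∈ Asub a)
    (hCn : g (Fin.last p) =
      -(C (yv ^ (2 * d)) * symJ a (toK (F (Fin.last p)))) -
        ∑ i : Fin p, C ((a i : Kk p) * xv i ^ d * yv ^ d) * symJ a (toK (F i.castSucc))) :
    ∀ j : Fin (p+1), m ≤ (j : ℕ) →
      ∀ lam : Fin (p+1) → ℕ, (∑ i, lam i = d) →
        (∀ i : Fin p, m ≤ (i : ℕ) → lam i.castSucc = 0) →
        constantCoeff (coeff (Finsupp.equivFunOnFinite.symm lam) (F j)) = 0 := by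
  intro j hj lam hlam hzero
  obtain ⟨M, hM⟩ : ∃ M : ℕ, ∀ i, a i ≤ M :=
    ⟨Finset.univ.sup fun i => (a i).toNat, fun i => (Int.self_le_toNat _).trans
      (by exact_mod_cast Finset.le_sup (f := fun i => (a i).toNat) (Finset.mem_univ i))⟩
  have he : ∀ i, (((M + 1 - a i).toNat : ℕ) : ℤ) + a i = M + 1 := fun i => by
    have := hM i
    omega
  have hbound := weightedTotalDegree'_coeff_compatPoly_le he hFhom hCn (hgA _)
  set μ := Finsupp.equivFunOnFinite.symm lam
  have hμ : ∑ v, μ v = d := hlam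
  have hneg : ∑ i, a i * μ i.castSucc ≤ 0 := Finset.sum_nonpos fun i _ => by
    rcases lt_or_ge (i : ℕ) m with him | him
    · exact mul_nonpos_of_nonpos_of_nonneg (hnonpos i him) (Nat.cast_nonneg _)
    · simp [μ, hzero i him]
  by_cases hμn : μ (Fin.last p) < d
  · induction j using Fin.lastCases with
    | last => exact constantCoeff_coeff_last_eq_zero_of_lt he hbound hμ hμn hneg
    | cast j =>
      exact constantCoeff_coeff_castSucc_eq_zero_of_lt he hbound hμ hμn hneg (hpos j hj)
        (hzero j hj)
  · obtain ⟨k, hk⟩ := hne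
    rw [Finsupp.eq_single_of_sum_eq_of_le hμ (not_lt.mp hμn)]
    induction j using Fin.lastCases with
    | last => exact constantCoeff_coeff_single_last_eq_zero he hbound hd hk
    | cast j =>
      exact constantCoeff_coeff_single_last_castSucc_eq_zero he hbound (by omega) (hpos j hj)

/-- Main claim, tangent bundle case. Assume `a_1 ≤ ⋯ ≤ a_m ≤ 0 < a_{m+1} ≤ ⋯ ≤ a_{n-1}`
with `0 ≤ m < n` and `a_k ≠ 0` for some `k`. Let `d ≥ 2`, let `f_1,…,f_n` have coefficients
in `R = ℂ[x_1,…,x_{n-1},y]` and `g_1,…,g_n` have coefficients in `A`, all homogeneous of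
degree `d` in `z_1,…,z_n`, satisfying the compatibility conditions `(C_j)` and `(C_n)` in
`K[z_1,…,z_n]`. Then for every `m+1 ≤ j ≤ n` and every composition `λ` of `d` with
`λ_i = 0` for `m+1 ≤ i ≤ n-1`, the coefficient `[z^λ](f_j) ∈ R` has zero constant term.
(Here the paper's `n` is `p+1`; indices `1,…,n` correspond to `Fin (p+1)`.) -/
theorem tangent_coefficients_vanish (p d m : ℕ) (hp : 1 ≤ p) (hd : 2 ≤ d) (hm : m < p + 1)
    (a : Fin p → ℤ) (hsort : Monotone a)
    (hnonpos : ∀ i : Fin p, (i : ℕ) < m → a i ≤ 0)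
    (hpos : ∀ i : Fin p, m ≤ (i : ℕ) → 0 < a i)
    (hne : ∃ k : Fin p, a k ≠ 0)
    (F : Fin (p+1) → MvPolynomial (Fin (p+1)) (MvPolynomial (Fin (p+1)) ℂ))
    (g : Fin (p+1) → MvPolynomial (Fin (p+1)) (Kk p))
    (hFhom : ∀ j, (F j).IsHomogeneous d)
    (hghom : ∀ j, (g j).IsHomogeneous d)
    (hgA : ∀ j c, coeff c (g j) ∈ Asub a)
    (hCj : ∀ j : Fin p,
      g j.castSucc = C (yv ^ ((d : ℤ) * a j)) * symJ a (toK (F j.castSucc)))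
    (hCn : g (Fin.last p) =
      -(C (yv ^ (2 * d)) * symJ a (toK (F (Fin.last p)))) -
        ∑ i : Fin p, C ((a i : Kk p) * xv i ^ d * yv ^ d) * symJ a (toK (F i.castSucc))) :
    ∀ j : Fin (p+1), m ≤ (j : ℕ) →
      ∀ lam : Fin (p+1) → ℕ, (∑ i, lam i = d) →
        (∀ i : Fin p, m ≤ (i : ℕ) → lam i.castSucc = 0) →
        constantCoeff (coeff (Finsupp.equivFunOnFinite.symm lam) (F j)) = 0 :=
  tangent_coefficients_vanish_general p d m hd a hnonpos hpos hne F g hFhom hgA hCn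

end
end
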